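/- Let G and H be finite simple graphs with G connected, and let S be a minimum distance-equalizer set of G⊙H such that for every i ∈ {1, …, n(G)} either V(H_i) ∩ S = ∅ or V(H_i) ⊆ S. If n(H) ≥ 2, then |U(S)| ≤ β(Ĝ) + min{ α(Ĝ)/n(H), (β(Ĝ) − β*(G))/(n(H)−1) }, where the inequality is between real numbers. -/

import Mathlib

universe u v

variable {V : Type u} {W : Type v}

/-- A distance-equalizer set of a graph: for every pair of distinct vertices outside `S`
there is a vertex of `S` equidistant to both. -/
def IsDistEqSet {α : Type*} (G : SimpleGraph α) (S : Set α) : Prop :=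
  ∀ ⦃x y : α⦄, x ∉ S → y ∉ S → x ≠ y → ∃ w ∈ S, G.dist w x = G.dist w y

/-- The equidistant dimension of a graph: the minimum cardinality of a distance-equalizer set. -/
noncomputable def eqdim {α : Type*} (G : SimpleGraph α) : ℕ :=
  sInf {n | ∃ S : Set α, IsDistEqSet G S ∧ S.ncard = n}

/-- The bisector of two vertices: vertices equidistant to both. -/
def bisector {α : Type*} (G : SimpleGraph α) (x y : α) : Set α :=
  {w | G.dist w x = G.dist w y}

/-- The empty bisector graph of `G`: two distinct vertices are adjacent iff their bisector
in `G` is empty. -/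
def emptyBisector {α : Type*} (G : SimpleGraph α) : SimpleGraph α where
  Adj x y := x ≠ y ∧ bisector G x y = ∅
  symm := ⟨by
    rintro x y ⟨h1, h2⟩
    refine ⟨h1.symm, Set.eq_empty_iff_forall_notMem.mpr fun w hw => ?_⟩
    exact Set.eq_empty_iff_forall_notMem.mp h2 w
      ((show G.dist w y = G.dist w x from hw).symm)⟩
  loopless := ⟨fun _ h => h.1 rfl⟩

/-- A vertex cover of a graph: a set of vertices meeting every edge. -/
def IsVertexCover {α : Type*} (G : SimpleGraph α) (C : Set α) : Prop :=
  ∀ ⦃x y : α⦄, G.Adj x y → x ∈ C ∨ y ∈ C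

/-- An independent set of a graph: a set of pairwise non-adjacent vertices. -/
def IsIndepSet {α : Type*} (G : SimpleGraph α) (A : Set α) : Prop :=
  ∀ ⦃x y : α⦄, x ∈ A → y ∈ A → ¬ G.Adj x y

/-- The vertex cover number `β(G)`. -/
noncomputable def vcNum {α : Type*} (G : SimpleGraph α) : ℕ :=
  sInf {n | ∃ C : Set α, IsVertexCover G C ∧ C.ncard = n}

/-- The independence number `α(G)`. -/
noncomputable def indepNum {α : Type*} (G : SimpleGraph α) : ℕ :=
  sSup {n | ∃ A : Set α, IsIndepSet G A ∧ A.ncard = n}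

/-- A forward-equalized pair `(X, Y)` of `G`: `X ∪ Y = V(G)` and for every
`a ∈ X \ Y` and `b ∈ Y \ X` there is `w` with `d(w,a) = d(w,b) + 1`. -/
def IsForwardEqualizedPair {α : Type*} (G : SimpleGraph α) (X Y : Set α) : Prop :=
  X ∪ Y = Set.univ ∧
  ∀ ⦃a⦄, a ∈ X \ Y → ∀ ⦃b⦄, b ∈ Y \ X → ∃ w, G.dist w a = G.dist w b + 1

/-- `β*(G)`: the minimum of `|X ∩ Y|` over all pairs of vertex covers `X, Y` of the
empty bisector graph of `G` such that `(X, Y)` is a forward-equalized pair of `G`. -/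
noncomputable def betaStar {α : Type*} (G : SimpleGraph α) : ℕ :=
  sInf {n | ∃ X Y : Set α,
    IsVertexCover (emptyBisector G) X ∧ IsVertexCover (emptyBisector G) Y ∧
    IsForwardEqualizedPair G X Y ∧ (X ∩ Y).ncard = n}

/-- The corona product `G ⊙ H`: one copy of `H` for each vertex `i` of `G` (the vertices
`Sum.inr (i, w)`), with `i` joined to every vertex of its copy. -/
def corona (G : SimpleGraph V) (H : SimpleGraph W) : SimpleGraph (V ⊕ V × W) where
  Adj x y :=
    match x, y with
    | Sum.inl a, Sum.inl b => G.Adj a b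
    | Sum.inl a, Sum.inr p => a = p.1
    | Sum.inr p, Sum.inl a => a = p.1
    | Sum.inr p, Sum.inr q => p.1 = q.1 ∧ H.Adj p.2 q.2
  symm := ⟨by
    rintro (a | p) (b | q) h
    · exact h.symm
    · exact h
    · exact h
    · exact ⟨h.1.symm, h.2.symm⟩⟩
  loopless := ⟨by
    rintro (a | p) h
    · exact G.irrefl h
    · exact H.irrefl h.2⟩

/-!
Call the vertices of `G` hubs and those of the copies of `H` leaves, and write `L = S ∩ V(G)`,
`U = U(S)`. Distances in `G ⊙ H` between vertices not in a common copy are distances in `G` between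
their hubs, plus one for each endpoint that is a leaf. So a vertex of `S` equidistant to two hubs,
or to two leaves over distinct hubs outside `U`, yields a vertex of `G` equidistant to those hubs:
`L` and `U` are vertex covers of `Ĝ`. A hub outside `L` and a leaf over a hub outside `U` can only
be equalized by a vertex one step closer to the leaf's hub, whence `L ∪ U = V(G)` and `(U, L)` is
forward-equalized. Thus `β(Ĝ) ≤ |L|` and `β*(G) ≤ |U ∩ L| = |U| + |L| - n(G)`. Conversely, all hubs
together with the copies over a minimum vertex cover of `Ĝ` form a distance-equalizer set, so
`|L| + |U| n(H) = |S| ≤ n(G) + β(Ĝ) n(H)`; with `n(G) ≤ α(Ĝ) + β(Ĝ)` both bounds follow.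
-/

namespace SimpleGraph

variable {α : Type*} {Γ : SimpleGraph α}

lemma Walk.le_length_add_of_adj_le {f : α → ℕ} (hf : ∀ ⦃a b⦄, Γ.Adj a b → f a ≤ f b + 1)
    {x y : α} (p : Γ.Walk x y) : f x ≤ p.length + f y := by
  induction p with
  | nil => simp
  | cons h _ ih => grind [Walk.length_cons]

lemma Reachable.le_dist_add_of_adj_le {f : α → ℕ} (hf : ∀ ⦃a b⦄, Γ.Adj a b → f a ≤ f b + 1)
    {x y : α} (h : Γ.Reachable x y) : f x ≤ Γ.dist x y + f y := by
  obtain ⟨p, hp⟩ := h.exists_walk_length_eq_dist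
  exact hp ▸ p.le_length_add_of_adj_le hf

end SimpleGraph

section GraphInvariants

variable {α : Type*} {Γ : SimpleGraph α}

lemma eqdim_le_ncard {S : Set α} (hS : IsDistEqSet Γ S) : eqdim Γ ≤ S.ncard :=
  Nat.sInf_le ⟨S, hS, rfl⟩

lemma vcNum_le_ncard {C : Set α} (hC : IsVertexCover Γ C) : vcNum Γ ≤ C.ncard :=
  Nat.sInf_le ⟨C, hC, rfl⟩

lemma betaStar_le_ncard_inter {X Y : Set α} (hX : IsVertexCover (emptyBisector Γ) X)
    (hY : IsVertexCover (emptyBisector Γ) Y) (hXY : IsForwardEqualizedPair Γ X Y) :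
    betaStar Γ ≤ (X ∩ Y).ncard :=
  Nat.sInf_le ⟨X, Y, hX, hY, hXY, rfl⟩

lemma exists_isVertexCover_ncard_eq_vcNum (Γ : SimpleGraph α) :
    ∃ C, IsVertexCover Γ C ∧ C.ncard = vcNum Γ :=
  Nat.sInf_mem (s := {n | ∃ C, IsVertexCover Γ C ∧ C.ncard = n})
    ⟨_, Set.univ, fun _ _ _ => Or.inl trivial, rfl⟩

lemma IsVertexCover.isIndepSet_compl {C : Set α} (hC : IsVertexCover Γ C) :
    IsIndepSet Γ Cᶜ :=
  fun _ _ hx hy hxy => (hC hxy).elim hx hy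

lemma card_le_indepNum_add_vcNum [Finite α] (Γ : SimpleGraph α) :
    Nat.card α ≤ indepNum Γ + vcNum Γ := by
  obtain ⟨C, hC, hCcard⟩ := exists_isVertexCover_ncard_eq_vcNum Γ
  have hbdd : BddAbove {n | ∃ A : Set α, IsIndepSet Γ A ∧ A.ncard = n} :=
    ⟨Nat.card α, by rintro _ ⟨A, -, rfl⟩; exact A.ncard_le_card⟩
  have hα : Cᶜ.ncard ≤ indepNum Γ := le_csSup hbdd ⟨Cᶜ, hC.isIndepSet_compl, rfl⟩
  have := C.ncard_add_ncard_compl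
  omega

lemma IsForwardEqualizedPair.ncard_inter_add_card [Finite α] {X Y : Set α}
    (h : IsForwardEqualizedPair Γ X Y) : (X ∩ Y).ncard + Nat.card α = X.ncard + Y.ncard := by
  rw [← Set.ncard_univ, ← h.1, Set.ncard_inter_add_ncard_union]

lemma bisector_nonempty_of_not_adj {i j : α} (h : ¬ (emptyBisector Γ).Adj i j) :
    (bisector Γ i j).Nonempty := by
  rcases eq_or_ne i j with rfl | hij
  · exact ⟨i, rfl⟩
  · exact Set.nonempty_iff_ne_empty.mpr fun hempty => h ⟨hij, hempty⟩

end GraphInvariants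

section SumCard

variable {α β : Type*} [Finite α] [Finite β]

lemma Set.ncard_eq_ncard_preimage_inl_add (S : Set (α ⊕ β)) :
    S.ncard = (Sum.inl ⁻¹' S).ncard + (Sum.inr ⁻¹' S).ncard := by
  rw [← Nat.card_coe_set_eq, Nat.card_congr Equiv.subtypeSum, Nat.card_sum]
  rfl

lemma Set.ncard_eq_of_preimage_inr_eq_prod {S : Set (α ⊕ α × β)} {C : Set α}
    (hC : Sum.inr ⁻¹' S = C ×ˢ Set.univ) :
    S.ncard = (Sum.inl ⁻¹' S).ncard + C.ncard * Nat.card β := by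
  rw [S.ncard_eq_ncard_preimage_inl_add, hC, Set.ncard_prod, Set.ncard_univ]

end SumCard

section CoronaDist

open SimpleGraph

variable {G : SimpleGraph V} {H : SimpleGraph W}

def corona.inlHom (G : SimpleGraph V) (H : SimpleGraph W) : G →g corona G H where
  toFun := Sum.inl
  map_rel' h := h

lemma corona_connected (hG : G.Connected) : (corona G H).Connected := by
  have hub : ∀ x, (corona G H).Reachable (Sum.inl (Sum.elim id Prod.fst x)) x := by
    rintro (a | ⟨i, u⟩)
    · rfl
    · exact Adj.reachable (G := corona G H) rfl
  have : Nonempty V := hG.nonempty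
  refine ⟨fun x y => ((hub x).symm.trans ?_).trans (hub y)⟩
  exact (hG _ _).map (corona.inlHom G H)

open scoped Classical in
/-- The distance in `G ⊙ H`, except that two vertices of the same copy of `H` are put at
distance `0`. -/
noncomputable def coronaDist (G : SimpleGraph V) : V ⊕ V × W → V ⊕ V × W → ℕ
  | Sum.inl a, Sum.inl b => G.dist a b
  | Sum.inl a, Sum.inr (j, _) => G.dist a j + 1
  | Sum.inr (i, _), Sum.inl b => G.dist i b + 1
  | Sum.inr (i, _), Sum.inr (j, _) => if i = j then 0 else G.dist i j + 2

lemma coronaDist_le_of_adj (hG : G.Connected) {x z : V ⊕ V × W} (hxz : (corona G H).Adj x z)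
    (y : V ⊕ V × W) : coronaDist G x y ≤ coronaDist G z y + 1 := by
  have tri : ∀ a b c : V, G.Adj a b → G.dist a c ≤ G.dist b c + 1 := fun a b c hab =>
    dist_eq_one_iff_adj.mpr hab ▸ add_comm (G.dist b c) _ ▸ hG.dist_triangle
  rcases x with a | ⟨i, u⟩ <;> rcases z with b | ⟨j, w⟩ <;> rcases y with c | ⟨k, s⟩ <;>
    simp only [corona] at hxz <;> simp only [coronaDist]
  all_goals grind

lemma coronaDist_le_dist (hG : G.Connected) (x y : V ⊕ V × W) :
    coronaDist G x y ≤ (corona G H).dist x y := by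
  have hyy : coronaDist G y y = 0 := by rcases y with b | ⟨j, w⟩ <;> simp [coronaDist]
  simpa [hyy] using ((corona_connected hG) x y).le_dist_add_of_adj_le
    (f := fun x => coronaDist G x y) (fun _ _ h => coronaDist_le_of_adj hG h y)

@[simp] lemma corona_dist_inl_inl (hG : G.Connected) (a b : V) :
    (corona G H).dist (Sum.inl a) (Sum.inl b) = G.dist a b := by
  refine le_antisymm ?_ (coronaDist_le_dist hG (Sum.inl a) (Sum.inl b))
  obtain ⟨p, hp⟩ := hG.exists_walk_length_eq_dist a b
  exact (dist_le (p.map (corona.inlHom G H))).trans_eq ((p.length_map _).trans hp)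

@[simp] lemma corona_dist_inl_inr (hG : G.Connected) (a j : V) (w : W) :
    (corona G H).dist (Sum.inl a) (Sum.inr (j, w)) = G.dist a j + 1 := by
  refine le_antisymm ?_ (coronaDist_le_dist hG (Sum.inl a) (Sum.inr (j, w)))
  have hjw : (corona G H).dist (Sum.inl j) (Sum.inr (j, w)) = 1 := dist_eq_one_iff_adj.mpr rfl
  simpa [hG, hjw] using (corona_connected (H := H) hG).dist_triangle (v := Sum.inl j)
    (u := Sum.inl a) (w := Sum.inr (j, w))

@[simp] lemma corona_dist_inr_inl (hG : G.Connected) (i : V) (u : W) (b : V) :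
    (corona G H).dist (Sum.inr (i, u)) (Sum.inl b) = G.dist i b + 1 := by
  rw [dist_comm, corona_dist_inl_inr hG, dist_comm]

lemma corona_dist_inr_inr (hG : G.Connected) {i j : V} (hij : i ≠ j) (u w : W) :
    (corona G H).dist (Sum.inr (i, u)) (Sum.inr (j, w)) = G.dist i j + 2 := by
  have hlower := coronaDist_le_dist (H := H) hG (Sum.inr (i, u)) (Sum.inr (j, w))
  have hupper := (corona_connected (H := H) hG).dist_triangle (v := Sum.inl i)
    (u := Sum.inr (i, u)) (w := Sum.inr (j, w))
  simp only [coronaDist, if_neg hij] at hlower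
  simp only [corona_dist_inr_inl hG, corona_dist_inl_inr hG, dist_self] at hupper
  omega

end CoronaDist

section CoronaEqualizers

variable {G : SimpleGraph V} {H : SimpleGraph W}

/-- The set `U(S)`. -/
def copySet (S : Set (V ⊕ V × W)) : Set V := {v | ∃ w, Sum.inr (v, w) ∈ S}

lemma preimage_inr_eq_copySet_prod {S : Set (V ⊕ V × W)}
    (hS : ∀ i : V, {x : V ⊕ V × W | ∃ w : W, x = Sum.inr (i, w)} ∩ S = ∅ ∨
      {x : V ⊕ V × W | ∃ w : W, x = Sum.inr (i, w)} ⊆ S) :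
    Sum.inr ⁻¹' S = copySet S ×ˢ Set.univ := by
  ext ⟨i, w⟩
  refine ⟨fun h => ⟨⟨w, h⟩, trivial⟩, ?_⟩
  rintro ⟨⟨w', hw'⟩, -⟩
  rcases hS i with h | h
  · exact absurd (h.subset ⟨⟨w', rfl⟩, hw'⟩) id
  · exact h ⟨w, rfl⟩

lemma IsDistEqSet.isVertexCover_preimage_inl (hG : G.Connected) {S : Set (V ⊕ V × W)}
    (hS : IsDistEqSet (corona G H) S) : IsVertexCover (emptyBisector G) (Sum.inl ⁻¹' S) := by
  rintro i j ⟨hij, hempty⟩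
  by_contra! h
  obtain ⟨x, -, hx⟩ := hS h.1 h.2 (Sum.inl_injective.ne hij)
  rcases x with k | ⟨k, u⟩ <;>
    simp only [corona_dist_inl_inl hG, corona_dist_inr_inl hG, Nat.add_right_cancel_iff] at hx
  all_goals exact hempty.subset hx

lemma isDistEqSet_corona_of_isVertexCover (hG : G.Connected) {C : Set V}
    (hC : IsVertexCover (emptyBisector G) C) :
    IsDistEqSet (corona G H) (Set.range Sum.inl ∪ Sum.inr '' (C ×ˢ Set.univ)) := by
  rintro (a | ⟨i, u⟩) (b | ⟨j, w⟩) hx hy -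
  · exact absurd (Or.inl ⟨a, rfl⟩) hx
  · exact absurd (Or.inl ⟨a, rfl⟩) hx
  · exact absurd (Or.inl ⟨b, rfl⟩) hy
  have hi : i ∉ C := fun hi => hx (Or.inr ⟨(i, u), ⟨hi, trivial⟩, rfl⟩)
  have hj : j ∉ C := fun hj => hy (Or.inr ⟨(j, w), ⟨hj, trivial⟩, rfl⟩)
  obtain ⟨k, hk⟩ := bisector_nonempty_of_not_adj fun h => (hC h).elim hi hj
  refine ⟨Sum.inl k, Or.inl ⟨k, rfl⟩, ?_⟩
  rw [corona_dist_inl_inr hG, corona_dist_inl_inr hG, show G.dist k i = G.dist k j from hk]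

lemma eqdim_corona_le [Finite V] [Finite W] (hG : G.Connected) :
    eqdim (corona G H) ≤ Nat.card V + vcNum (emptyBisector G) * Nat.card W := by
  obtain ⟨C, hC, hCcard⟩ := exists_isVertexCover_ncard_eq_vcNum (emptyBisector G)
  refine (eqdim_le_ncard (isDistEqSet_corona_of_isVertexCover hG hC)).trans_eq ?_
  rw [Set.ncard_eq_of_preimage_inr_eq_prod (C := C) (by ext; simp), ← hCcard]
  simp

variable [Nonempty W]

lemma IsDistEqSet.isVertexCover_copySet (hG : G.Connected) {S : Set (V ⊕ V × W)}
    (hS : IsDistEqSet (corona G H) S) : IsVertexCover (emptyBisector G) (copySet S) := by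
  obtain ⟨w⟩ := ‹Nonempty W›
  rintro i j ⟨hij, hempty⟩
  by_contra! h
  obtain ⟨x, hxS, hx⟩ := hS (fun hi => h.1 ⟨w, hi⟩) (fun hj => h.2 ⟨w, hj⟩)
    (by simp [hij])
  rcases x with k | ⟨k, u⟩
  · simp only [corona_dist_inl_inr hG, Nat.add_right_cancel_iff] at hx
    exact hempty.subset hx
  · have hki : k ≠ i := by rintro rfl; exact h.1 ⟨u, hxS⟩
    have hkj : k ≠ j := by rintro rfl; exact h.2 ⟨u, hxS⟩
    simp only [corona_dist_inr_inr hG hki, corona_dist_inr_inr hG hkj,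
      Nat.add_right_cancel_iff] at hx
    exact hempty.subset hx

lemma IsDistEqSet.preimage_inl_union_copySet (hG : G.Connected) {S : Set (V ⊕ V × W)}
    (hS : IsDistEqSet (corona G H) S) : Sum.inl ⁻¹' S ∪ copySet S = Set.univ := by
  obtain ⟨w⟩ := ‹Nonempty W›
  refine Set.eq_univ_of_forall fun i => ?_
  by_contra! h
  simp only [Set.mem_union, not_or] at h
  obtain ⟨x, hxS, hx⟩ := hS h.1 (fun hi => h.2 ⟨w, hi⟩) Sum.inl_ne_inr
  rcases x with k | ⟨k, u⟩
  · simp [corona_dist_inl_inl hG, corona_dist_inl_inr hG] at hx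
  · have hki : k ≠ i := by rintro rfl; exact h.2 ⟨u, hxS⟩
    simp [corona_dist_inr_inl hG, corona_dist_inr_inr hG hki] at hx

lemma IsDistEqSet.isForwardEqualizedPair (hG : G.Connected) {S : Set (V ⊕ V × W)}
    (hS : IsDistEqSet (corona G H) S) :
    IsForwardEqualizedPair G (copySet S) (Sum.inl ⁻¹' S) := by
  obtain ⟨w⟩ := ‹Nonempty W›
  refine ⟨Set.union_comm _ _ ▸ hS.preimage_inl_union_copySet hG, fun a ha b hb => ?_⟩
  obtain ⟨x, hxS, hx⟩ := hS ha.2 (fun hb' => hb.2 ⟨w, hb'⟩) Sum.inl_ne_inr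
  rcases x with k | ⟨k, u⟩
  · exact ⟨k, by simpa [corona_dist_inl_inl hG, corona_dist_inl_inr hG] using hx⟩
  · have hkb : k ≠ b := by rintro rfl; exact hb.2 ⟨u, hxS⟩
    refine ⟨k, ?_⟩
    simp only [corona_dist_inr_inl hG, corona_dist_inr_inr hG hkb] at hx
    omega

end CoronaEqualizers

lemma le_add_min_div_of_mul_le {u a b c k : ℝ} (hk : 1 < k) (h₁ : u * k ≤ a + b * k)
    (h₂ : u * k + c ≤ u + b * k) : u ≤ b + min (a / k) ((b - c) / (k - 1)) := by
  rw [← sub_le_iff_le_add', le_min_iff, le_div_iff₀ (by linarith), le_div_iff₀ (by linarith)]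
  constructor <;> linarith

/-- If `S` is a minimum distance-equalizer set of `G ⊙ H` such that each
copy of `H` is disjoint from or contained in `S`, and `n(H) ≥ 2`, then, as real numbers,
`|U(S)| ≤ β(Ĝ) + min{α(Ĝ)/n(H), (β(Ĝ) − β*(G))/(n(H) − 1)}`. -/
theorem corona_Uset_card_upper_bound [Fintype V] [Fintype W]
    (G : SimpleGraph V) (H : SimpleGraph W) (hG : G.Connected)
    (S : Set (V ⊕ V × W)) (hS : IsDistEqSet (corona G H) S)
    (hmin : S.ncard = eqdim (corona G H))
    (hstruct : ∀ i : V, {x : V ⊕ V × W | ∃ w : W, x = Sum.inr (i, w)} ∩ S = ∅ ∨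
      {x : V ⊕ V × W | ∃ w : W, x = Sum.inr (i, w)} ⊆ S)
    (hW : 2 ≤ Fintype.card W) :
    ({v : V | ∃ w : W, Sum.inr (v, w) ∈ S}.ncard : ℝ) ≤
      (vcNum (emptyBisector G) : ℝ) +
        min ((indepNum (emptyBisector G) : ℝ) / (Fintype.card W : ℝ))
          (((vcNum (emptyBisector G) : ℝ) - (betaStar G : ℝ)) /
            ((Fintype.card W : ℝ) - 1)) := by
  change ((copySet S).ncard : ℝ) ≤ _
  rw [← Nat.card_eq_fintype_card] at hW ⊢
  have : Nonempty W := (Nat.card_pos_iff.mp (by omega)).1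
  have hL := hS.isVertexCover_preimage_inl hG
  have hfwd := hS.isForwardEqualizedPair hG
  have hsize : (Sum.inl ⁻¹' S).ncard + (copySet S).ncard * Nat.card W ≤
      Nat.card V + vcNum (emptyBisector G) * Nat.card W := by
    rw [← Set.ncard_eq_of_preimage_inr_eq_prod (preimage_inr_eq_copySet_prod hstruct), hmin]
    exact eqdim_corona_le hG
  have hβ := vcNum_le_ncard hL
  have hβstar := betaStar_le_ncard_inter (hS.isVertexCover_copySet hG) hL hfwd
  have hinter := hfwd.ncard_inter_add_card
  have hα := card_le_indepNum_add_vcNum (emptyBisector G)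
  refine le_add_min_div_of_mul_le (by exact_mod_cast hW) ?_ ?_ <;> norm_cast <;> omega
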